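/- arXiv:1102.2871 — 2 statements merged into one kernel-verified Lean document; each statement's English description precedes it below -/
import Mathlib

section
/- Let μ > 0, k > 0, p > 0 with p ≠ 1, and f_p : (0,∞) → ℝ continuous. Define G(W) = W - 1 - ln W for W > 0 and F(Z) = ∫₁^Z (μ - f_p(z)) dz/z for Z > 0. Let α₊ = 1/(√p+1) and α₋ = 1/(√p-1), and set L(W,Z) = 2kμ G(W) + (α₊² + α₋²) F(Z). Then along any positive solution of Ẇ = -(1/k)W(μ - f_p(Z)) - (μ/k)W(W-1), Ż = -pZ(μ - f_p(Z)) - (p-1)μZ(W-1), one has d/dt L(W(t),Z(t)) = -(μ(W-1) + α₊√p(μ - f_p(Z)))² - (μ(W-1) + α₋√p(μ - f_p(Z)))². -/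
/-!
With `u = W - 1` and `v = μ - f Z`, the chain rule gives
`d/dt (k μ G(W)) = -μ²u² - μuv` and `d/dt F(Z) = -p v² - (p - 1) μuv`.
So `d/dt (k μ G(W) + α² F(Z))` is the perfect square `-(μu + α√p v)²` exactly when
`α² (p - 1) + 1 = 2 α √p`, whose two roots are `α₊` and `α₋`; the functional `L` is the sum of
the two resulting Lyapunov functionals.
-/

open Real Set

theorem hasDerivAt_sub_one_sub_log {f : ℝ → ℝ} {f' x : ℝ} (hf : HasDerivAt f f' x)
    (hx : f x ≠ 0) :
    HasDerivAt (fun y => f y - 1 - log (f y)) (f' - f' / f x) x :=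
  (hf.sub_const 1).sub (hf.log hx)

theorem hasDerivAt_intervalIntegral_of_continuousOn {g : ℝ → ℝ} {s : Set ℝ} {a x : ℝ}
    (hs : IsOpen s) [s.OrdConnected] (hg : ContinuousOn g s) (ha : a ∈ s) (hx : x ∈ s) :
    HasDerivAt (fun z => ∫ y in a..z, g y) (g x) x :=
  intervalIntegral.integral_hasDerivAt_right
    ((hg.mono (Set.OrdConnected.uIcc_subset ‹_› ha hx)).intervalIntegrable)
    (hg.stronglyMeasurableAtFilter hs x hx) (hg.continuousAt (hs.mem_nhds hx))

theorem sq_mul_sub_one_add_one_of_mul_sqrt_add_eq_one {p α c : ℝ} (hp : 0 ≤ p)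
    (h : α * (√p + c) = 1) (hc : c ^ 2 = 1) : α ^ 2 * (p - 1) + 1 = 2 * α * √p := by
  linear_combination (α * √p - 1 - α * c) * h + α ^ 2 * hc - α ^ 2 * Real.sq_sqrt hp

theorem hasDerivAt_lyapunov_eq_neg_sq {μ k p α : ℝ} (hk : k ≠ 0) (hp : 0 ≤ p)
    (hα : α ^ 2 * (p - 1) + 1 = 2 * α * √p) {f : ℝ → ℝ} (hf : ContinuousOn f (Ioi 0))
    {W Z : ℝ → ℝ} {t : ℝ} (hWt : W t ≠ 0) (hZt : 0 < Z t)
    (hW : HasDerivAt W (-(1/k) * W t * (μ - f (Z t)) - (μ/k) * W t * (W t - 1)) t)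
    (hZ : HasDerivAt Z (-p * Z t * (μ - f (Z t)) - (p - 1) * μ * Z t * (W t - 1)) t) :
    HasDerivAt (fun t => k * μ * (W t - 1 - log (W t)) + α ^ 2 * ∫ s in (1:ℝ)..Z t, (μ - f s) / s)
      (-(μ * (W t - 1) + α * √p * (μ - f (Z t))) ^ 2) t := by
  have hg : ContinuousOn (fun s => (μ - f s) / s) (Ioi 0) :=
    (continuousOn_const.sub hf).div continuousOn_id fun s hs => (mem_Ioi.mp hs).ne'
  have hF := (hasDerivAt_intervalIntegral_of_continuousOn isOpen_Ioi hg
    (mem_Ioi.mpr one_pos) hZt).comp t hZ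
  refine (((hasDerivAt_sub_one_sub_log hW hWt).const_mul (k * μ)).add
    (hF.const_mul (α ^ 2))).congr_deriv ?_
  field_simp
  linear_combination (-(μ - f (Z t)) * μ * (W t - 1)) * hα
    + α ^ 2 * (μ - f (Z t)) ^ 2 * Real.sq_sqrt hp

theorem stmt_7_general (μ k p : ℝ) (hk : 0 < k) (hp : 0 < p) (hp1 : p ≠ 1)
    (f : ℝ → ℝ) (hf : ContinuousOn f (Set.Ioi 0))
    (W Z : ℝ → ℝ) (hWpos : ∀ t, 0 < W t) (hZpos : ∀ t, 0 < Z t)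
    (hW : ∀ t : ℝ, HasDerivAt W
      (-(1/k) * W t * (μ - f (Z t)) - (μ/k) * W t * (W t - 1)) t)
    (hZ : ∀ t : ℝ, HasDerivAt Z
      (-p * Z t * (μ - f (Z t)) - (p - 1) * μ * Z t * (W t - 1)) t)
    (G F : ℝ → ℝ)
    (hG : ∀ w : ℝ, G w = w - 1 - Real.log w)
    (hF : ∀ z : ℝ, F z = ∫ s in (1:ℝ)..z, (μ - f s) / s)
    (αp αm : ℝ) (hαp : αp = 1/(Real.sqrt p + 1)) (hαm : αm = 1/(Real.sqrt p - 1)) :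
    ∀ t : ℝ, HasDerivAt (fun t => 2*k*μ * G (W t) + (αp^2 + αm^2) * F (Z t))
      (-(μ*(W t - 1) + αp*Real.sqrt p*(μ - f (Z t)))^2
       - (μ*(W t - 1) + αm*Real.sqrt p*(μ - f (Z t)))^2) t := by
  have hsqrt_sub_one : √p - 1 ≠ 0 := sub_ne_zero.mpr fun h => hp1 (Real.sqrt_eq_one.mp h)
  have hrootp : αp ^ 2 * (p - 1) + 1 = 2 * αp * √p :=
    sq_mul_sub_one_add_one_of_mul_sqrt_add_eq_one hp.le
      (by rw [hαp]; exact one_div_mul_cancel (by positivity)) (one_pow 2)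
  have hrootm : αm ^ 2 * (p - 1) + 1 = 2 * αm * √p :=
    sq_mul_sub_one_add_one_of_mul_sqrt_add_eq_one (c := -1) hp.le
      (by rw [hαm, ← sub_eq_add_neg]; exact one_div_mul_cancel hsqrt_sub_one)
      (by norm_num)
  intro t
  have hlyap {α : ℝ} (hα : α ^ 2 * (p - 1) + 1 = 2 * α * √p) :=
    hasDerivAt_lyapunov_eq_neg_sq hk.ne' hp.le hα hf (hWpos t).ne' (hZpos t)
      (hW t) (hZ t)
  have hsplit : (fun t => 2*k*μ * G (W t) + (αp^2 + αm^2) * F (Z t)) = fun t =>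
      (k * μ * (W t - 1 - log (W t)) + αp ^ 2 * ∫ s in (1:ℝ)..Z t, (μ - f s) / s) +
      (k * μ * (W t - 1 - log (W t)) + αm ^ 2 * ∫ s in (1:ℝ)..Z t, (μ - f s) / s) := by
    funext s
    rw [hG, hF]
    ring
  rw [hsplit]
  exact ((hlyap hrootp).add (hlyap hrootm)).congr_deriv (by ring)

theorem stmt_7 (μ k p : ℝ) (hμ : 0 < μ) (hk : 0 < k) (hp : 0 < p) (hp1 : p ≠ 1)
    (f : ℝ → ℝ) (hf : ContinuousOn f (Set.Ioi 0))
    (W Z : ℝ → ℝ) (hWpos : ∀ t, 0 < W t) (hZpos : ∀ t, 0 < Z t)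
    (hW : ∀ t : ℝ, HasDerivAt W
      (-(1/k) * W t * (μ - f (Z t)) - (μ/k) * W t * (W t - 1)) t)
    (hZ : ∀ t : ℝ, HasDerivAt Z
      (-p * Z t * (μ - f (Z t)) - (p - 1) * μ * Z t * (W t - 1)) t)
    (G F : ℝ → ℝ)
    (hG : ∀ w : ℝ, G w = w - 1 - Real.log w)
    (hF : ∀ z : ℝ, F z = ∫ s in (1:ℝ)..z, (μ - f s) / s)
    (αp αm : ℝ) (hαp : αp = 1/(Real.sqrt p + 1)) (hαm : αm = 1/(Real.sqrt p - 1)) :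
    ∀ t : ℝ, HasDerivAt (fun t => 2*k*μ * G (W t) + (αp^2 + αm^2) * F (Z t))
      (-(μ*(W t - 1) + αp*Real.sqrt p*(μ - f (Z t)))^2
       - (μ*(W t - 1) + αm*Real.sqrt p*(μ - f (Z t)))^2) t :=
  stmt_7_general μ k p hk hp hp1 f hf W Z hWpos hZpos hW hZ G F hG hF αp αm hαp hαm
end

section
/- Let T > 0 and let V, W : ℝ → (0,∞) be T-periodic continuous functions satisfying Ẇ = (√(βτ)/k) W^{1/2}(V - W) (equivalently Ẇ = (Λ(W,0)/k)(V-W) with Λ(W,0) = √(βτW)) for constants β, τ, k > 0. Then ∫₀ᵀ √(V(s)) ds ≤ ∫₀ᵀ √(W(s)) ds ≤ T √((1/T)∫₀ᵀ V(s) ds). -/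
/-!
Both inequalities come from the pointwise AM–GM bound `2√a ≤ a/m + m`, integrated against a
suitable weight `m`, together with two conservation laws that periodicity forces on `W`: with
`c = √(βτ)/k`, the derivatives of `2√W` and of `log W` are `c (V - W)` and `c (V/√W - √W)`,
so their integrals over a period vanish, giving `∫ V = ∫ W` and `∫ V/√W = ∫ √W`. With `m = √W`
the bound yields `2∫√V ≤ ∫ V/√W + ∫ √W = 2∫√W`; with `m` the square root of the mean of `W`
(equal to the mean of `V`) it yields the second inequality.
-/

open intervalIntegral Real

lemma two_mul_sqrt_le_div_add {a m : ℝ} (ha : 0 ≤ a) (hm : 0 < m) : 2 * √a ≤ a / m + m := by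
  rw [div_add' _ _ _ hm.ne', le_div_iff₀ hm]
  nlinarith [two_mul_le_add_sq (√a) m, sq_sqrt ha]

lemma two_mul_integral_sqrt_le {a b : ℝ} {f g : ℝ → ℝ} (hab : a ≤ b) (hf : Continuous f)
    (hg : Continuous g) (hf₀ : ∀ x, 0 ≤ f x) (hg₀ : ∀ x, 0 < g x) :
    2 * ∫ x in a..b, √(f x) ≤ (∫ x in a..b, f x / g x) + ∫ x in a..b, g x := by
  have hfg : Continuous fun x => f x / g x := hf.div hg fun x => (hg₀ x).ne'
  rw [← integral_const_mul, ← integral_add (hfg.intervalIntegrable a b) (hg.intervalIntegrable a b)]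
  exact integral_mono_on hab ((continuous_sqrt.comp hf).const_mul 2 |>.intervalIntegrable a b)
    ((hfg.add hg).intervalIntegrable a b) fun x _ => two_mul_sqrt_le_div_add (hf₀ x) (hg₀ x)

lemma integral_sqrt_le_mul_sqrt_mean {a b : ℝ} {f : ℝ → ℝ} (hab : a < b) (hf : Continuous f)
    (hf₀ : ∀ x, 0 < f x) :
    ∫ x in a..b, √(f x) ≤ (b - a) * √((b - a)⁻¹ * ∫ x in a..b, f x) := by
  set m := √((b - a)⁻¹ * ∫ x in a..b, f x)
  have hlen : 0 < b - a := sub_pos.2 hab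
  have hI : 0 < ∫ x in a..b, f x :=
    intervalIntegral_pos_of_pos (hf.intervalIntegrable a b) hf₀ hab
  have hm : 0 < m := sqrt_pos.2 (mul_pos (inv_pos.2 hlen) hI)
  have hmean : ∫ x in a..b, f x = (b - a) * m ^ 2 := by
    rw [sq_sqrt (mul_pos (inv_pos.2 hlen) hI).le]
    field_simp
  have hamgm := two_mul_integral_sqrt_le hab.le hf continuous_const (fun x => (hf₀ x).le) fun _ => hm
  rw [integral_div, integral_const, smul_eq_mul, hmean, pow_two, ← mul_assoc,
    mul_div_cancel_right₀ _ hm.ne'] at hamgm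
  linarith

lemma integral_eq_zero_of_hasDerivAt_of_periodic {F f : ℝ → ℝ} {T : ℝ}
    (hF : Function.Periodic F T) (hderiv : ∀ t, HasDerivAt F (f t) t)
    (hf : IntervalIntegrable f MeasureTheory.volume 0 T) : ∫ t in (0 : ℝ)..T, f t = 0 := by
  rw [integral_eq_sub_of_hasDerivAt (fun t _ => hderiv t) hf,
    ← zero_add T, hF 0, sub_self]

section Conservation

variable {c T : ℝ} {V W : ℝ → ℝ}

lemma integral_eq_integral_of_hasDerivAt_sqrt_mul_sub (hc : c ≠ 0) (hV : Continuous V)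
    (hW₀ : ∀ t, 0 < W t) (hWper : Function.Periodic W T)
    (hW : ∀ t, HasDerivAt W (c * √(W t) * (V t - W t)) t) :
    ∫ t in (0 : ℝ)..T, V t = ∫ t in (0 : ℝ)..T, W t := by
  have hWc : Continuous W := continuous_iff_continuousAt.2 fun t => (hW t).continuousAt
  have hderiv : ∀ t, HasDerivAt (fun t => 2 * √(W t)) (c * (V t - W t)) t := fun t => by
    refine (((hasDerivAt_sqrt (hW₀ t).ne').comp t (hW t)).const_mul 2).congr_deriv ?_
    field_simp [(sqrt_pos.2 (hW₀ t)).ne']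
  have hzero := integral_eq_zero_of_hasDerivAt_of_periodic (hWper.comp fun w => 2 * √w) hderiv
    ((continuous_const.mul (hV.sub hWc)).intervalIntegrable 0 T)
  rw [integral_const_mul, integral_sub (hV.intervalIntegrable 0 T) (hWc.intervalIntegrable 0 T)]
    at hzero
  linarith [(mul_eq_zero.1 hzero).resolve_left hc]

lemma integral_div_sqrt_eq_integral_sqrt_of_hasDerivAt_sqrt_mul_sub (hc : c ≠ 0) (hV : Continuous V)
    (hW₀ : ∀ t, 0 < W t) (hWper : Function.Periodic W T)
    (hW : ∀ t, HasDerivAt W (c * √(W t) * (V t - W t)) t) :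
    ∫ t in (0 : ℝ)..T, V t / √(W t) = ∫ t in (0 : ℝ)..T, √(W t) := by
  have hsW : Continuous fun t => √(W t) :=
    continuous_sqrt.comp <| continuous_iff_continuousAt.2 fun t => (hW t).continuousAt
  have hVW : Continuous fun t => V t / √(W t) := hV.div hsW fun t => (sqrt_pos.2 (hW₀ t)).ne'
  have hderiv : ∀ t, HasDerivAt (fun t => log (W t)) (c * (V t / √(W t) - √(W t))) t :=
    fun t => by
      refine ((hasDerivAt_log (hW₀ t).ne').comp t (hW t)).congr_deriv ?_
      have hs := sqrt_pos.2 (hW₀ t)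
      have hWs := (sq_sqrt (hW₀ t).le).symm
      generalize √(W t) = s at hs hWs ⊢
      rw [hWs]
      field_simp
  have hzero := integral_eq_zero_of_hasDerivAt_of_periodic (hWper.comp log) hderiv
    ((continuous_const.mul (hVW.sub hsW)).intervalIntegrable 0 T)
  rw [integral_const_mul, integral_sub (hVW.intervalIntegrable 0 T) (hsW.intervalIntegrable 0 T)]
    at hzero
  linarith [(mul_eq_zero.1 hzero).resolve_left hc]

end Conservation

theorem stmt_13_general (T β τ k : ℝ) (hT : 0 < T) (hβ : 0 < β) (hτ : 0 < τ) (hk : 0 < k)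
    (V W : ℝ → ℝ) (hVcont : Continuous V) (hVpos : ∀ t, 0 < V t) (hWpos : ∀ t, 0 < W t)
    (hWper : Function.Periodic W T)
    (hW : ∀ t : ℝ, HasDerivAt W
      (Real.sqrt (β*τ) / k * Real.sqrt (W t) * (V t - W t)) t) :
    (∫ s in (0:ℝ)..T, Real.sqrt (V s)) ≤ (∫ s in (0:ℝ)..T, Real.sqrt (W s)) ∧
    (∫ s in (0:ℝ)..T, Real.sqrt (W s)) ≤ T * Real.sqrt ((1/T) * ∫ s in (0:ℝ)..T, V s) := by
  have hc : √(β * τ) / k ≠ 0 := (div_pos (sqrt_pos.2 (mul_pos hβ hτ)) hk).ne'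
  have hWcont : Continuous W := continuous_iff_continuousAt.2 fun t => (hW t).continuousAt
  have hsW : Continuous fun t => √(W t) := continuous_sqrt.comp hWcont
  constructor
  · have hamgm := two_mul_integral_sqrt_le hT.le hVcont hsW (fun t => (hVpos t).le)
      fun t => sqrt_pos.2 (hWpos t)
    rw [integral_div_sqrt_eq_integral_sqrt_of_hasDerivAt_sqrt_mul_sub hc hVcont hWpos hWper hW]
      at hamgm
    linarith
  · rw [integral_eq_integral_of_hasDerivAt_sqrt_mul_sub hc hVcont hWpos hWper hW]
    simpa [one_div] using integral_sqrt_le_mul_sqrt_mean hT hWcont hWpos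

theorem stmt_13 (T β τ k : ℝ) (hT : 0 < T) (hβ : 0 < β) (hτ : 0 < τ) (hk : 0 < k)
    (V W : ℝ → ℝ) (hVcont : Continuous V) (hVpos : ∀ t, 0 < V t) (hWpos : ∀ t, 0 < W t)
    (hVper : Function.Periodic V T) (hWper : Function.Periodic W T)
    (hW : ∀ t : ℝ, HasDerivAt W
      (Real.sqrt (β*τ) / k * Real.sqrt (W t) * (V t - W t)) t) :
    (∫ s in (0:ℝ)..T, Real.sqrt (V s)) ≤ (∫ s in (0:ℝ)..T, Real.sqrt (W s)) ∧
    (∫ s in (0:ℝ)..T, Real.sqrt (W s)) ≤ T * Real.sqrt ((1/T) * ∫ s in (0:ℝ)..T, V s) :=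
  stmt_13_general T β τ k hT hβ hτ hk V W hVcont hVpos hWpos hWper hW
end
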